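/- If G is a gap-free simple graph on n vertices with no isolated vertices, then τ_max(G) ≥ 2√n − 2. -/

import Mathlib

/-!
Let `W` be a minimal vertex cover of maximum size `τ`, so that `S = Wᶜ` is independent. Every
independent set `I` extends to a maximal one, whose complement is a minimal vertex cover containing
`N(I)`; hence `|N(I)| ≤ τ`. Take `I = {a} ∪ (S \ N(a))`: its neighbourhood contains the trace
`N(a) \ W` and every `w ∈ W` whose trace is not inside that of `a`, so the trace of `a` has at
most as many elements as there are `w ∈ W` whose trace lies inside it.

For any family of nonempty traces with this property, `|⋃ traces| ≤ ⌊τ²/4⌋ + 1`: if the family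
splits into two non-overlapping parts, induct and use superadditivity of `⌊m²/4⌋ + 1`; otherwise,
with `k` inclusion-maximal traces, each of them has at most `τ - k + 1` elements, and since they
overlap in a connected way their union has at most `k(τ - k + 1) - (k - 1) ≤ τ²/4 + 1` elements.
As there are no isolated vertices, `S` is the union of the traces, so
`n ≤ τ²/4 + τ + 1 = (τ/2 + 1)²`.
-/

/-- `W` is a vertex cover of `G`: it meets every edge. -/
def IsVC {V : Type*} (G : SimpleGraph V) (W : Finset V) : Prop :=
  ∀ ⦃u v : V⦄, G.Adj u v → u ∈ W ∨ v ∈ W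

/-- `W` is a minimal vertex cover of `G`. -/
def IsMinVC {V : Type*} (G : SimpleGraph V) (W : Finset V) : Prop :=
  IsVC G W ∧ ∀ W' : Finset V, W' ⊂ W → ¬ IsVC G W'

/-- The maximum size of a minimal vertex cover of `G`. -/
noncomputable def tauMax {V : Type*} (G : SimpleGraph V) : ℕ :=
  sSup {k : ℕ | ∃ W : Finset V, IsMinVC G W ∧ W.card = k}
/-- `G` is gap-free: any two disjoint edges are joined by a third edge meeting both. -/
def GapFree {V : Type*} (G : SimpleGraph V) : Prop :=
  ∀ ⦃a b c d : V⦄, G.Adj a b → G.Adj c d →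
    ({a, b} : Set V) ∩ {c, d} = ∅ →
    ∃ u v : V, G.Adj u v ∧ (u ∈ ({a, b} : Set V) ∨ v ∈ ({a, b} : Set V)) ∧
      (u ∈ ({c, d} : Set V) ∨ v ∈ ({c, d} : Set V))

open Finset

lemma mul_sub_le_sq_div_four {k m : ℕ} (h : k ≤ m) : k * (m - k) ≤ m ^ 2 / 4 := by
  obtain ⟨j, rfl⟩ := Nat.exists_eq_add_of_le h
  rw [Nat.add_sub_cancel_left, Nat.le_div_iff_mul_le (by norm_num)]
  nlinarith [sq_nonneg ((k : ℤ) - j)]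

lemma sq_div_four_add_sq_div_four_add_one_le {a b : ℕ} (ha : 1 ≤ a) (hb : 1 ≤ b) :
    a ^ 2 / 4 + b ^ 2 / 4 + 1 ≤ (a + b) ^ 2 / 4 := by
  have sq_even (z : ℕ) : (2 * z) ^ 2 = 4 * (z * z) := by ring
  have sq_odd (z : ℕ) : (2 * z + 1) ^ 2 = 4 * (z * z + z) + 1 := by ring
  obtain ⟨x, rfl | rfl⟩ := a.even_or_odd' <;> obtain ⟨y, rfl | rfl⟩ := b.even_or_odd' <;>
    have := sq_even x <;> have := sq_odd x <;> have := sq_even y <;> have := sq_odd y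
  · have : (2 * x + 2 * y) ^ 2 = 4 * (x * x + 2 * (x * y) + y * y) := by ring
    have : 1 ≤ x * y := Nat.mul_pos (by omega) (by omega)
    omega
  · have : (2 * x + (2 * y + 1)) ^ 2 = 4 * (x * x + 2 * (x * y) + y * y + x + y) + 1 := by ring
    omega
  · have : (2 * x + 1 + 2 * y) ^ 2 = 4 * (x * x + 2 * (x * y) + y * y + x + y) + 1 := by ring
    omega
  · have : (2 * x + 1 + (2 * y + 1)) ^ 2 =
        4 * (x * x + 2 * (x * y) + y * y + 2 * x + 2 * y + 1) := by ring
    omega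

section LinkedFamily

variable {ι α : Type*} [DecidableEq α] {W : Finset ι} {f : ι → Finset α}

noncomputable def maximalTraces (W : Finset ι) (f : ι → Finset α) : Finset (Finset α) := by
  classical exact {t ∈ W.image f | Maximal (· ∈ W.image f) t}

lemma mem_maximalTraces {t : Finset α} :
    t ∈ maximalTraces W f ↔ Maximal (· ∈ W.image f) t := by
  classical
  simp only [maximalTraces, mem_filter, and_iff_right_iff_imp]
  exact fun h ↦ h.prop

lemma maximalTraces_subset_image :
    maximalTraces W f ⊆ W.image f :=
  fun _ ht ↦ (mem_maximalTraces.mp ht).prop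

lemma exists_mem_maximalTraces_subset {w : ι} (hw : w ∈ W) :
    ∃ t ∈ maximalTraces W f, f w ⊆ t := by
  obtain ⟨t, hwt, ht⟩ := (W.image f).exists_le_maximal (mem_image_of_mem f hw)
  exact ⟨t, mem_maximalTraces.mpr ht, hwt⟩

variable [DecidableEq ι]

/-- The family `(f w)_{w ∈ W}` is linked if its intersection graph is connected. -/
def IsLinked (W : Finset ι) (f : ι → Finset α) : Prop :=
  ∀ U ⊂ W, U.Nonempty → ∃ w ∈ W \ U, ∃ u ∈ U, ¬Disjoint (f w) (f u)

lemma IsLinked.card_biUnion_add_card_le (hl : IsLinked W f)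
    (hW : W.Nonempty) : #(W.biUnion f) + #W ≤ ∑ w ∈ W, #(f w) + 1 := by
  suffices grow : ∀ j < #W, ∃ U ⊆ W, #U = j + 1 ∧ #(U.biUnion f) + #U ≤ ∑ u ∈ U, #(f u) + 1 by
    obtain ⟨U, hUW, hU, hbound⟩ := grow (#W - 1) (by simpa [Nat.sub_lt_iff_lt_add] using hW)
    rwa [eq_of_subset_of_card_le hUW (by omega)] at hbound
  intro j
  induction j with
  | zero =>
    obtain ⟨w, hw⟩ := hW
    exact fun _ ↦ ⟨{w}, by simpa using hw, by simp, by simp⟩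
  | succ j ih =>
    intro hj
    obtain ⟨U, hUW, hU, hbound⟩ := ih (by omega)
    obtain ⟨w, hw, u, hu, hwu⟩ :=
      hl U (ssubset_of_subset_of_ne hUW (by rintro rfl; omega)) (card_pos.mp (by omega))
    have hwU : w ∉ U := (mem_sdiff.mp hw).2
    have hoverlap : 1 ≤ #(f w ∩ U.biUnion f) := by
      obtain ⟨x, hxw, hxu⟩ := not_disjoint_iff.mp hwu
      exact card_pos.mpr ⟨x, mem_inter.mpr ⟨hxw, mem_biUnion.mpr ⟨u, hu, hxu⟩⟩⟩
    refine ⟨insert w U, insert_subset (mem_sdiff.mp hw).1 hUW,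
      by rw [card_insert_of_notMem hwU, hU], ?_⟩
    have := card_union_add_card_inter (f w) (U.biUnion f)
    rw [biUnion_insert, sum_insert hwU, card_insert_of_notMem hwU]
    omega

lemma IsLinked.isLinked_maximalTraces (hl : IsLinked W f) :
    IsLinked (maximalTraces W f) id := by
  classical
  intro U hU hUne
  set U' := W.filter (fun w ↦ ∃ t ∈ U, f w ⊆ t)
  have hU'W : U' ⊂ W := by
    obtain ⟨t₀, ht₀, ht₀U⟩ := exists_of_ssubset hU
    obtain ⟨w₀, hw₀, rfl⟩ := mem_image.mp (mem_maximalTraces.mp ht₀).prop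
    refine ssubset_of_subset_of_ne (filter_subset _ _) fun hU'W ↦ ?_
    obtain ⟨t, htU, hw₀t⟩ := (mem_filter.mp (hU'W ▸ hw₀)).2
    have ht := mem_maximalTraces.mp (hU.subset htU)
    rw [le_antisymm hw₀t ((mem_maximalTraces.mp ht₀).2 ht.prop hw₀t)] at ht₀U
    exact ht₀U htU
  have hU'ne : U'.Nonempty := by
    obtain ⟨t, htU⟩ := hUne
    obtain ⟨w, hw, rfl⟩ := mem_image.mp (mem_maximalTraces.mp (hU.subset htU)).prop
    exact ⟨w, mem_filter.mpr ⟨hw, f w, htU, subset_rfl⟩⟩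
  obtain ⟨w, hw, u, hu, hwu⟩ := hl U' hU'W hU'ne
  obtain ⟨hwW, hwU'⟩ := mem_sdiff.mp hw
  obtain ⟨t, htU, hut⟩ := (mem_filter.mp hu).2
  obtain ⟨t', ht', hwt'⟩ := exists_mem_maximalTraces_subset (f := f) hwW
  have ht'U : t' ∉ U := fun ht'U ↦ hwU' (mem_filter.mpr ⟨hwW, t', ht'U, hwt'⟩)
  exact ⟨t', mem_sdiff.mpr ⟨ht', ht'U⟩, t, htU, fun h ↦ hwu (h.mono hwt' hut)⟩

end LinkedFamily

section DominatedTraces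

variable {ι α : Type*} [DecidableEq ι] [DecidableEq α] {W : Finset ι} {f : ι → Finset α}

lemma card_add_card_maximalTraces_le (hdom : ∀ a ∈ W, #(f a) ≤ #{w ∈ W | f w ⊆ f a})
    {t : Finset α} (ht : t ∈ maximalTraces W f) : #t + #(maximalTraces W f) ≤ #W + 1 := by
  have htmax := mem_maximalTraces.mp ht
  obtain ⟨a, ha, rfl⟩ := mem_image.mp htmax.prop
  set D := {w ∈ W | f w ⊆ f a}
  have hothers : (maximalTraces W f).erase (f a) ⊆ (W \ D).image f := by
    intro t' ht'
    obtain ⟨ht'a, ht'⟩ := mem_erase.mp ht'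
    have ht'max := mem_maximalTraces.mp ht'
    obtain ⟨w, hw, rfl⟩ := mem_image.mp ht'max.prop
    refine mem_image_of_mem f (mem_sdiff.mpr ⟨hw, fun hwD ↦ ht'a ?_⟩)
    have hwa := (mem_filter.mp hwD).2
    exact le_antisymm hwa (ht'max.2 htmax.prop hwa)
  have h₁ := card_le_card hothers
  have h₂ := card_image_le (s := W \ D) (f := f)
  have h₃ : #(W \ D) + #D = #W := card_sdiff_add_card_eq_card (filter_subset _ _)
  have h₄ := card_erase_add_one ht
  have h₅ : #(f a) ≤ #D := hdom a ha
  omega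

lemma IsLinked.card_biUnion_le (hl : IsLinked W f)
    (hdom : ∀ a ∈ W, #(f a) ≤ #{w ∈ W | f w ⊆ f a}) : #(W.biUnion f) ≤ #W ^ 2 / 4 + 1 := by
  rcases W.eq_empty_or_nonempty with rfl | ⟨w, hw⟩
  · simp
  set T := maximalTraces W f
  have hcover : W.biUnion f ⊆ T.biUnion id := by
    refine biUnion_subset.mpr fun w hw ↦ ?_
    obtain ⟨t, ht, hwt⟩ := exists_mem_maximalTraces_subset (f := f) hw
    exact hwt.trans (subset_biUnion_of_mem id ht)
  have hT : T.Nonempty := (exists_mem_maximalTraces_subset (f := f) hw).imp fun _ h ↦ h.1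
  have hTW : #T ≤ #W := (card_le_card maximalTraces_subset_image).trans card_image_le
  have hper : ∀ t ∈ T, #t + #T ≤ #W + 1 := fun t ht ↦ card_add_card_maximalTraces_le hdom ht
  have hsum : ∑ t ∈ T, #t ≤ #T * (#W + 1 - #T) := by
    simpa using sum_le_card_nsmul T card (#W + 1 - #T) fun t ht ↦ by have := hper t ht; omega
  have hunion : #(T.biUnion id) + #T ≤ ∑ t ∈ T, #t + 1 :=
    hl.isLinked_maximalTraces.card_biUnion_add_card_le hT
  have hsplit : #T * (#W + 1 - #T) = #T * (#W - #T) + #T := by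
    rw [show #W + 1 - #T = #W - #T + 1 by omega, mul_add_one]
  have := card_le_card hcover
  have := mul_sub_le_sq_div_four hTW
  omega

lemma card_le_card_filter_subset_of_separated {U : Finset ι} (hUW : U ⊆ W)
    (hsep : ∀ w ∈ W \ U, ∀ u ∈ U, Disjoint (f w) (f u)) (hne : ∀ w ∈ W, (f w).Nonempty)
    (hdom : ∀ a ∈ W, #(f a) ≤ #{w ∈ W | f w ⊆ f a}) :
    ∀ a ∈ U, #(f a) ≤ #{w ∈ U | f w ⊆ f a} := by
  intro a ha
  refine (hdom a (hUW ha)).trans (card_le_card fun w hw ↦ ?_)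
  obtain ⟨hwW, hwa⟩ := mem_filter.mp hw
  refine mem_filter.mpr ⟨by_contra fun hwU ↦ ?_, hwa⟩
  have := disjoint_self.mp ((hsep w (mem_sdiff.mpr ⟨hwW, hwU⟩) a ha).mono_right hwa)
  exact (hne w hwW).ne_empty this

theorem card_biUnion_le_sq_div_four_add_one (hne : ∀ w ∈ W, (f w).Nonempty)
    (hdom : ∀ a ∈ W, #(f a) ≤ #{w ∈ W | f w ⊆ f a}) : #(W.biUnion f) ≤ #W ^ 2 / 4 + 1 := by
  induction W using Finset.strongInduction with
  | H W ih =>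
  by_cases hl : IsLinked W f
  · exact hl.card_biUnion_le hdom
  rw [IsLinked] at hl
  push Not at hl
  obtain ⟨U, hUW, hU, hsep⟩ := hl
  have hsep' : ∀ w ∈ W \ (W \ U), ∀ u ∈ W \ U, Disjoint (f w) (f u) := by
    rw [Finset.sdiff_sdiff_eq_self hUW.subset]
    exact fun w hw u hu ↦ (hsep u hu w hw).symm
  have hbound₁ := ih U hUW (fun w hw ↦ hne w (hUW.subset hw))
    (card_le_card_filter_subset_of_separated hUW.subset hsep hne hdom)
  have hbound₂ := ih (W \ U) (sdiff_ssubset hUW.subset hU) (fun w hw ↦ hne w (sdiff_subset hw))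
    (card_le_card_filter_subset_of_separated sdiff_subset hsep' hne hdom)
  have hmerge := sq_div_four_add_sq_div_four_add_one_le (card_pos.mpr hU)
    (card_pos.mpr (sdiff_nonempty.mpr hUW.not_subset))
  rw [card_sdiff_of_subset hUW.subset] at hbound₂ hmerge
  calc #(W.biUnion f) = #((U ∪ W \ U).biUnion f) := by rw [union_sdiff_of_subset hUW.subset]
    _ ≤ #(U.biUnion f) + #((W \ U).biUnion f) := by rw [union_biUnion]; exact card_union_le _ _
    _ ≤ #W ^ 2 / 4 + 1 := by
        rw [Nat.add_sub_cancel' (card_le_card hUW.subset)] at hmerge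
        omega

end DominatedTraces

section VertexCover

variable {V : Type*} {G : SimpleGraph V}

lemma IsMinVC.exists_adj_notMem [DecidableEq V] {W : Finset V} (hW : IsMinVC G W) {w : V}
    (hw : w ∈ W) : ∃ s ∉ W, G.Adj w s := by
  obtain ⟨u, v, huv, hu, hv⟩ : ∃ u v, G.Adj u v ∧ u ∉ W.erase w ∧ v ∉ W.erase w := by
    simpa [IsVC] using hW.2 _ (erase_ssubset hw)
  have outside {x : V} (hx : x ∉ W.erase w) (hxw : x ≠ w) : x ∉ W := by simp_all
  rcases hW.1 huv with huW | hvW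
  · obtain rfl : u = w := by by_contra h; exact outside hu h huW
    exact ⟨v, outside hv huv.ne.symm, huv⟩
  · obtain rfl : v = w := by by_contra h; exact outside hv h hvW
    exact ⟨u, outside hu huv.ne, huv.symm⟩

variable [Fintype V]

lemma IsVC.isIndepSet_compl [DecidableEq V] {W : Finset V} (hW : IsVC G W) :
    G.IsIndepSet ↑Wᶜ := fun x hx y hy _ hxy ↦ by
  rcases hW hxy with h | h
  · exact mem_compl.mp hx h
  · exact mem_compl.mp hy h

lemma isMinVC_compl_of_maximal [DecidableEq V] {S : Finset V}
    (hS : Maximal (fun s : Finset V ↦ G.IsIndepSet s) S) : IsMinVC G Sᶜ := by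
  refine ⟨fun u v huv ↦ ?_, fun W' hW' hW'VC ↦ ?_⟩
  · by_contra! h
    simp only [mem_compl, not_not] at h
    exact hS.prop h.1 h.2 huv.ne huv
  obtain ⟨w, hwS, hwW'⟩ := exists_of_ssubset hW'
  have hwS : w ∉ S := mem_compl.mp hwS
  obtain ⟨s, hsS, hws⟩ : ∃ s ∈ S, G.Adj w s := by
    by_contra! h
    have hindep : G.IsIndepSet ↑(insert w S) := by
      rw [coe_insert]
      exact hS.prop.insert fun b hb _ ↦ ⟨h b hb, fun hbw ↦ h b hb hbw.symm⟩
    exact hwS (hS.2 hindep (subset_insert w S) (mem_insert_self w S))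
  rcases hW'VC hws with hw | hs
  · exact hwW' hw
  · exact mem_compl.mp (hW'.subset hs) hsS

lemma IsMinVC.card_le_tauMax {W : Finset V} (hW : IsMinVC G W) : #W ≤ tauMax G :=
  le_csSup ⟨Fintype.card V, by rintro _ ⟨W', -, rfl⟩; exact card_le_univ W'⟩ ⟨W, hW, rfl⟩

lemma exists_isMinVC_card_eq_tauMax : ∃ W : Finset V, IsMinVC G W ∧ #W = tauMax G := by
  classical
  obtain ⟨S, -, hS⟩ := Finite.exists_le_maximal (p := fun s : Finset V ↦ G.IsIndepSet s)
    (a := ∅) (by simp)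
  exact Nat.sSup_mem (s := {k | ∃ W : Finset V, IsMinVC G W ∧ #W = k})
    ⟨_, Sᶜ, isMinVC_compl_of_maximal hS, rfl⟩
    ⟨Fintype.card V, by rintro _ ⟨W', -, rfl⟩; exact card_le_univ W'⟩

lemma card_le_tauMax_of_isIndepSet [DecidableEq V] {I N : Finset V} (hI : G.IsIndepSet I)
    (hN : ∀ x ∈ N, ∃ s ∈ I, G.Adj s x) : #N ≤ tauMax G := by
  obtain ⟨S, hIS, hS⟩ := Finite.exists_le_maximal (p := fun s : Finset V ↦ G.IsIndepSet s) hI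
  refine (card_le_card fun x hx ↦ mem_compl.mpr fun hxS ↦ ?_).trans
    (isMinVC_compl_of_maximal hS).card_le_tauMax
  obtain ⟨s, hsI, hsx⟩ := hN x hx
  exact hS.prop (hIS hsI) hxS hsx.ne hsx

variable [DecidableEq V] [DecidableRel G.Adj]

lemma card_neighborFinset_sdiff_le {W : Finset V} (hW : IsVC G W) (hτ : tauMax G ≤ #W) (a : V) :
    #(G.neighborFinset a \ W) ≤ #{w ∈ W | G.neighborFinset w \ W ⊆ G.neighborFinset a \ W} := by
  set D := {w ∈ W | G.neighborFinset w \ W ⊆ G.neighborFinset a \ W}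
  have hI : G.IsIndepSet ↑(insert a (Wᶜ \ G.neighborFinset a)) := by
    rw [coe_insert]
    refine (hW.isIndepSet_compl.mono (coe_subset.mpr sdiff_subset)).insert fun b hb _ ↦ ?_
    have hab : ¬G.Adj a b := fun h ↦ (mem_sdiff.mp hb).2 ((G.mem_neighborFinset a b).mpr h)
    exact ⟨hab, fun h ↦ hab h.symm⟩
  have hN : ∀ x ∈ (G.neighborFinset a \ W) ∪ (W \ D),
      ∃ s ∈ insert a (Wᶜ \ G.neighborFinset a), G.Adj s x := by
    intro x hx
    rcases mem_union.mp hx with hxa | hxD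
    · exact ⟨a, mem_insert_self _ _, (G.mem_neighborFinset a x).mp (mem_sdiff.mp hxa).1⟩
    obtain ⟨hxW, hxD⟩ := mem_sdiff.mp hxD
    obtain ⟨s, hsx, hsa⟩ := not_subset.mp fun h ↦ hxD (mem_filter.mpr ⟨hxW, h⟩)
    obtain ⟨hxs, hsW⟩ := mem_sdiff.mp hsx
    refine ⟨s, mem_insert_of_mem (mem_sdiff.mpr ⟨mem_compl.mpr hsW, fun has ↦ ?_⟩),
      ((G.mem_neighborFinset x s).mp hxs).symm⟩
    exact hsa (mem_sdiff.mpr ⟨has, hsW⟩)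
  have hcard := card_le_tauMax_of_isIndepSet hI hN
  rw [card_union_of_disjoint (disjoint_sdiff_self_left.mono_right sdiff_subset)] at hcard
  have : #(W \ D) + #D = #W := card_sdiff_add_card_eq_card (filter_subset _ _)
  omega

lemma card_compl_le_sq_div_four_add_one (hiso : ∀ v, ∃ u, G.Adj v u) {W : Finset V}
    (hW : IsMinVC G W) (hτ : tauMax G ≤ #W) : #Wᶜ ≤ #W ^ 2 / 4 + 1 := by
  have hcover : Wᶜ ⊆ W.biUnion fun w ↦ G.neighborFinset w \ W := by
    intro s hs
    obtain ⟨u, hsu⟩ := hiso s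
    have huW : u ∈ W := (hW.1 hsu).resolve_left (mem_compl.mp hs)
    exact mem_biUnion.mpr ⟨u, huW, mem_sdiff.mpr
      ⟨(G.mem_neighborFinset u s).mpr hsu.symm, mem_compl.mp hs⟩⟩
  refine (card_le_card hcover).trans (card_biUnion_le_sq_div_four_add_one (fun w hw ↦ ?_)
    fun a _ ↦ card_neighborFinset_sdiff_le hW.1 hτ a)
  obtain ⟨s, hsW, hws⟩ := hW.exists_adj_notMem hw
  exact ⟨s, mem_sdiff.mpr ⟨(G.mem_neighborFinset w s).mpr hws, hsW⟩⟩

end VertexCover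

lemma two_mul_sqrt_sub_two_le {n τ : ℕ} (h : n ≤ τ ^ 2 / 4 + τ + 1) :
    2 * Real.sqrt n - 2 ≤ τ := by
  have hfloor : ((τ ^ 2 / 4 : ℕ) : ℝ) ≤ (τ : ℝ) ^ 2 / 4 := by
    exact_mod_cast Nat.cast_div_le (m := τ ^ 2) (n := 4) (α := ℝ)
  have hn : (n : ℝ) ≤ ((τ : ℝ) / 2 + 1) ^ 2 := by
    have : (n : ℝ) ≤ ((τ ^ 2 / 4 : ℕ) : ℝ) + τ + 1 := by exact_mod_cast h
    nlinarith
  have := Real.sqrt_le_sqrt hn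
  rw [Real.sqrt_sq (by positivity)] at this
  linarith

theorem stmt_2_general {V : Type*} [Fintype V] (G : SimpleGraph V)
    (hiso : ∀ v : V, ∃ u : V, G.Adj v u) :
    2 * Real.sqrt (Fintype.card V) - 2 ≤ (tauMax G : ℝ) := by
  classical
  obtain ⟨W, hW, hτ⟩ := exists_isMinVC_card_eq_tauMax (G := G)
  apply two_mul_sqrt_sub_two_le
  rw [← hτ, ← card_add_card_compl W]
  have := card_compl_le_sq_div_four_add_one hiso hW hτ.ge
  omega

theorem stmt_2 {V : Type*} [Fintype V] (G : SimpleGraph V)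
    (hiso : ∀ v : V, ∃ u : V, G.Adj v u) (hgap : GapFree G) :
    2 * Real.sqrt (Fintype.card V) - 2 ≤ (tauMax G : ℝ) :=
  stmt_2_general G hiso
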